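/- arXiv:2303.14020 — 2 statements merged into one kernel-verified Lean document; each statement's English description precedes it below -/
import Mathlib

section
/- Let X₁,…,Xₙ be independent real random variables, ν > 0 and c > 0 constants such that Σₖ E[Xₖ²] ≤ ν and for all integers ℓ ≥ 3, Σₖ E[|Xₖ|^ℓ] ≤ (ℓ!/2) ν c^{ℓ-2}. Then for all t > 0, P(|Σₖ (Xₖ − E[Xₖ])| ≥ t) ≤ 2·exp(−t²/(2(ν + c t))). -/
/-!
Chernoff's method. Since `exp y - y ≤ exp |y| - |y|`, a single variable satisfies
`E exp (s (X - E X)) ≤ exp (E [exp (|s| |X|) - 1 - |s| |X|])`, and the exponent is the tail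
`∑_{ℓ ≥ 2} |s|^ℓ E|X|^ℓ / ℓ!` of the exponential series. Summed over `k`, the moment conditions
dominate it termwise by the geometric series `ν s² / 2 ∑ (|s| c)^ℓ = ν s² / (2 (1 - |s| c))`.
By independence this bounds the moment generating function of the centred sum, and the Chernoff
bound at `s = ± t / (ν + c t)` gives each of the two tails.
-/

open MeasureTheory ProbabilityTheory Real Finset

lemma Real.hasSum_pow_div_factorial (x : ℝ) :
    HasSum (fun ℓ : ℕ => x ^ ℓ / ℓ.factorial) (exp x) := by
  rw [Real.exp_eq_exp_ℝ]
  exact NormedSpace.expSeries_div_hasSum_exp x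

lemma Real.exp_sub_le_exp_abs_sub_abs (y : ℝ) : exp y - y ≤ exp |y| - |y| := by
  rcases le_total 0 y with hy | hy
  · rw [abs_of_nonneg hy]
  · have := Real.sinh_le_self_iff.2 hy
    rw [Real.sinh_eq] at this
    rw [abs_of_nonpos hy]
    linarith

lemma subGamma_exponent_at_optimum {ν c t : ℝ} (hν : 0 < ν) (hc : 0 ≤ c) (ht : 0 < t) :
    -(t / (ν + c * t)) * t + ν * (t / (ν + c * t)) ^ 2 / 2 * (1 - t / (ν + c * t) * c)⁻¹ =
      -(t ^ 2) / (2 * (ν + c * t)) := by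
  have hd : 0 < ν + c * t := by positivity
  have h1 : 1 - t / (ν + c * t) * c = ν / (ν + c * t) := by
    field_simp
    ring
  rw [h1]
  field_simp
  ring

lemma moment_term_le_geometric {a : ℕ → ℝ} {ν c s : ℝ} (hs : 0 ≤ s) (ha2 : a 2 ≤ ν)
    (ha : ∀ ℓ : ℕ, 3 ≤ ℓ → a ℓ ≤ (ℓ.factorial : ℝ) / 2 * ν * c ^ (ℓ - 2)) (ℓ : ℕ) :
    s ^ (ℓ + 2) * a (ℓ + 2) / (ℓ + 2).factorial ≤ ν * s ^ 2 / 2 * (s * c) ^ ℓ := by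
  rcases Nat.eq_zero_or_pos ℓ with rfl | hℓ
  · have : ((0 + 2).factorial : ℝ) = 2 := by norm_num [Nat.factorial]
    rw [this, zero_add, pow_zero, mul_one, mul_comm ν]
    gcongr
  · have hb := ha (ℓ + 2) (by omega)
    rw [Nat.add_sub_cancel] at hb
    calc s ^ (ℓ + 2) * a (ℓ + 2) / (ℓ + 2).factorial
        ≤ s ^ (ℓ + 2) * ((ℓ + 2).factorial / 2 * ν * c ^ ℓ) / (ℓ + 2).factorial := by gcongr
      _ = ν * s ^ 2 / 2 * (s * c) ^ ℓ := by
        field_simp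
        ring

section Integration

variable {Ω : Type*} [MeasurableSpace Ω] {μ : Measure Ω}

lemma integrable_and_hasSum_integral_of_nonneg {F : ℕ → Ω → ℝ} {G : Ω → ℝ}
    (hG : AEStronglyMeasurable G μ) (hF : ∀ n, Integrable (F n) μ) (hF0 : ∀ n a, 0 ≤ F n a)
    (hFG : ∀ a, HasSum (F · a) (G a)) (hsum : Summable fun n => ∫ a, F n a ∂μ) :
    Integrable G μ ∧ HasSum (fun n => ∫ a, F n a ∂μ) (∫ a, G a ∂μ) := by
  have hnorm : ∀ n, ∫ a, ‖F n a‖ ∂μ = ∫ a, F n a ∂μ := fun n =>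
    integral_congr_ae (ae_of_all _ fun a => Real.norm_of_nonneg (hF0 n a))
  have hG_eq : G = fun a => ∑' n, F n a := funext fun a => (hFG a).tsum_eq.symm
  refine ⟨⟨hG, ?_⟩, ?_⟩
  · rw [hasFiniteIntegral_iff_ofReal (ae_of_all _ fun a => (hFG a).nonneg (hF0 · a))]
    calc ∫⁻ a, ENNReal.ofReal (G a) ∂μ
        = ∫⁻ a, ∑' n, ENNReal.ofReal (F n a) ∂μ := by
          refine lintegral_congr fun a => ?_
          rw [(hFG a).tsum_eq.symm, ENNReal.ofReal_tsum_of_nonneg (hF0 · a) (hFG a).summable]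
      _ = ∑' n, ENNReal.ofReal (∫ a, F n a ∂μ) := by
          rw [lintegral_tsum fun n => (hF n).aemeasurable.ennreal_ofReal]
          exact tsum_congr fun n =>
            (ofReal_integral_eq_lintegral_ofReal (hF n) (ae_of_all _ (hF0 n))).symm
      _ = ENNReal.ofReal (∑' n, ∫ a, F n a ∂μ) :=
          (ENNReal.ofReal_tsum_of_nonneg (fun n => integral_nonneg (hF0 n)) hsum).symm
      _ < ⊤ := ENNReal.ofReal_lt_top
  · rw [hG_eq]
    exact hasSum_integral_of_summable_integral_norm hF (hsum.congr fun n => (hnorm n).symm)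

variable {f : Ω → ℝ}

lemma integrable_exp_mul_abs_and_hasSum [IsProbabilityMeasure μ] {s : ℝ} (hs : 0 ≤ s)
    (hint : ∀ ℓ : ℕ, 1 ≤ ℓ → Integrable (fun ω => |f ω| ^ ℓ) μ)
    (hsum : Summable fun ℓ : ℕ => s ^ (ℓ + 2) * (∫ ω, |f ω| ^ (ℓ + 2) ∂μ) / (ℓ + 2).factorial) :
    Integrable (fun ω => exp (s * |f ω|)) μ ∧
      HasSum (fun ℓ : ℕ => s ^ (ℓ + 2) * (∫ ω, |f ω| ^ (ℓ + 2) ∂μ) / (ℓ + 2).factorial)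
        (∫ ω, exp (s * |f ω|) ∂μ - 1 - s * ∫ ω, |f ω| ∂μ) := by
  have hint' : ∀ ℓ : ℕ, Integrable (fun ω => |f ω| ^ ℓ) μ := by
    intro ℓ
    rcases Nat.eq_zero_or_pos ℓ with rfl | hℓ
    · simp
    · exact hint ℓ hℓ
  have hF : ∀ ℓ : ℕ, ∫ ω, (s * |f ω|) ^ ℓ / ℓ.factorial ∂μ =
      s ^ ℓ * (∫ ω, |f ω| ^ ℓ ∂μ) / ℓ.factorial := by
    intro ℓ
    simp_rw [mul_pow, mul_div_assoc]
    rw [integral_const_mul, integral_div]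
  have hmeas : AEStronglyMeasurable (fun ω => exp (s * |f ω|)) μ :=
    continuous_exp.comp_aestronglyMeasurable
      (((hint' 1).aestronglyMeasurable.congr (ae_of_all _ fun ω => pow_one _)).const_mul s)
  have hFint : ∀ ℓ : ℕ, Integrable (fun ω => (s * |f ω|) ^ ℓ / ℓ.factorial) μ := by
    intro ℓ
    simp_rw [mul_pow]
    exact ((hint' ℓ).const_mul (s ^ ℓ)).div_const _
  have hFsum : Summable fun ℓ : ℕ => ∫ ω, (s * |f ω|) ^ ℓ / ℓ.factorial ∂μ := by
    rw [← summable_nat_add_iff 2]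
    exact hsum.congr fun ℓ => (hF (ℓ + 2)).symm
  obtain ⟨hexp, hsum_full⟩ := integrable_and_hasSum_integral_of_nonneg hmeas hFint
    (fun ℓ ω => by positivity) (fun ω => Real.hasSum_pow_div_factorial (s * |f ω|)) hFsum
  refine ⟨hexp, ?_⟩
  have hfirst : ∑ ℓ ∈ range 2, ∫ ω, (s * |f ω|) ^ ℓ / ℓ.factorial ∂μ =
      1 + s * ∫ ω, |f ω| ∂μ := by
    simp [sum_range_succ, hF]
  rw [← hasSum_nat_add_iff' 2, hfirst] at hsum_full
  simpa only [hF, sub_sub] using hsum_full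

lemma integrable_exp_mul_sub (hf : AEStronglyMeasurable f μ) {t : ℝ}
    (hexp : Integrable (fun ω => exp (|t| * |f ω|)) μ) (a : ℝ) :
    Integrable (fun ω => exp (t * (f ω - a))) μ := by
  have hmeas : AEStronglyMeasurable (fun ω => exp (t * (f ω - a))) μ :=
    continuous_exp.comp_aestronglyMeasurable ((hf.sub aestronglyMeasurable_const).const_mul t)
  refine (hexp.const_mul (exp (-(t * a)))).mono' hmeas (ae_of_all _ fun ω => ?_)
  rw [Real.norm_of_nonneg (exp_nonneg _), mul_sub, sub_eq_neg_add, exp_add]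
  exact mul_le_mul_of_nonneg_left (exp_le_exp.2 ((le_abs_self _).trans (abs_mul _ _).le))
    (exp_nonneg _)

lemma mgf_sub_integral_le (hf : Integrable f μ) {t : ℝ}
    (hexp : Integrable (fun ω => exp (|t| * |f ω|)) μ) :
    mgf (fun ω => f ω - ∫ x, f x ∂μ) μ t ≤
      exp (∫ ω, exp (|t| * |f ω|) ∂μ - 1 - |t| * ∫ ω, |f ω| ∂μ) := by
  set m := ∫ x, f x ∂μ
  set D := ∫ ω, exp (|t| * |f ω|) ∂μ - 1 - |t| * ∫ ω, |f ω| ∂μ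
  have htf : Integrable (fun ω => exp (t * f ω)) μ := by
    simpa using integrable_exp_mul_sub hf.aestronglyMeasurable hexp 0
  have hkey : ∫ ω, exp (t * f ω) ∂μ ≤ 1 + t * m + D := by
    have h : ∫ ω, (exp (t * f ω) - t * f ω) ∂μ ≤ ∫ ω, (exp (|t| * |f ω|) - |t| * |f ω|) ∂μ :=
      integral_mono (htf.sub (hf.const_mul t)) (hexp.sub (hf.abs.const_mul |t|)) fun ω => by
        simpa only [abs_mul] using Real.exp_sub_le_exp_abs_sub_abs (t * f ω)
    rw [integral_sub htf (hf.const_mul t), integral_sub hexp (hf.abs.const_mul |t|),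
      integral_const_mul, integral_const_mul] at h
    linarith
  have hmgf : mgf (fun ω => f ω - m) μ t = exp (-(t * m)) * ∫ ω, exp (t * f ω) ∂μ := by
    rw [mgf, ← integral_const_mul]
    congr 1 with ω
    rw [← exp_add]
    ring_nf
  calc mgf (fun ω => f ω - m) μ t
      = exp (-(t * m)) * ∫ ω, exp (t * f ω) ∂μ := hmgf
    _ ≤ exp (-(t * m)) * exp (t * m + D) := by
        gcongr
        linarith [add_one_le_exp (t * m + D)]
    _ = exp D := by rw [← exp_add]; ring_nf

end Integration

section Sums

variable {Ω ι : Type*} [MeasurableSpace Ω] {μ : Measure Ω} [IsProbabilityMeasure μ] [Fintype ι]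
  {X : ι → Ω → ℝ} {ν c : ℝ}

lemma sum_integral_exp_mul_abs_sub_le
    (hint : ∀ k, ∀ ℓ : ℕ, 1 ≤ ℓ → Integrable (fun ω => |X k ω| ^ ℓ) μ)
    (hvar : ∑ k, ∫ ω, (X k ω) ^ 2 ∂μ ≤ ν)
    (hmom : ∀ ℓ : ℕ, 3 ≤ ℓ →
      ∑ k, ∫ ω, |X k ω| ^ ℓ ∂μ ≤ (ℓ.factorial : ℝ) / 2 * ν * c ^ (ℓ - 2))
    (hc : 0 ≤ c) {s : ℝ} (hs : 0 ≤ s) (hsc : s * c < 1) :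
    (∀ k, Integrable (fun ω => exp (s * |X k ω|)) μ) ∧
      ∑ k, (∫ ω, exp (s * |X k ω|) ∂μ - 1 - s * ∫ ω, |X k ω| ∂μ) ≤
        ν * s ^ 2 / 2 * (1 - s * c)⁻¹ := by
  set M : ℕ → ℝ := fun ℓ => ∑ k, ∫ ω, |X k ω| ^ ℓ ∂μ
  have hmoment_nonneg : ∀ k (ℓ : ℕ), 0 ≤ ∫ ω, |X k ω| ^ ℓ ∂μ :=
    fun k ℓ => integral_nonneg fun ω => by positivity
  have hterm (ℓ : ℕ) : s ^ (ℓ + 2) * M (ℓ + 2) / (ℓ + 2).factorial ≤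
      ν * s ^ 2 / 2 * (s * c) ^ ℓ :=
    moment_term_le_geometric hs (by simpa only [M, sq_abs] using hvar) hmom ℓ
  have hgeo : HasSum (fun ℓ : ℕ => ν * s ^ 2 / 2 * (s * c) ^ ℓ) (ν * s ^ 2 / 2 * (1 - s * c)⁻¹) :=
    (hasSum_geometric_of_lt_one (by positivity) hsc).mul_left _
  have hsum (k : ι) : Summable fun ℓ : ℕ =>
      s ^ (ℓ + 2) * (∫ ω, |X k ω| ^ (ℓ + 2) ∂μ) / (ℓ + 2).factorial := by
    refine hgeo.summable.of_nonneg_of_le (fun ℓ => by have := hmoment_nonneg k (ℓ + 2); positivity)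
      fun ℓ => le_trans ?_ (hterm ℓ)
    gcongr
    exact single_le_sum (fun j _ => hmoment_nonneg j (ℓ + 2)) (mem_univ k)
  have hk (k : ι) := integrable_exp_mul_abs_and_hasSum hs (hint k) (hsum k)
  refine ⟨fun k => (hk k).1, hasSum_le hterm ?_ hgeo⟩
  convert hasSum_sum fun k _ => (hk k).2 using 1
  simp only [M, mul_sum, sum_div]

lemma mgf_sum_sub_integral_le (hmeas : ∀ k, Measurable (X k)) (hindep : iIndepFun X μ)
    (hint : ∀ k, ∀ ℓ : ℕ, 1 ≤ ℓ → Integrable (fun ω => |X k ω| ^ ℓ) μ)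
    (hvar : ∑ k, ∫ ω, (X k ω) ^ 2 ∂μ ≤ ν)
    (hmom : ∀ ℓ : ℕ, 3 ≤ ℓ →
      ∑ k, ∫ ω, |X k ω| ^ ℓ ∂μ ≤ (ℓ.factorial : ℝ) / 2 * ν * c ^ (ℓ - 2))
    (hc : 0 ≤ c) {t : ℝ} (htc : |t| * c < 1) :
    Integrable (fun ω => exp (t * ∑ k, (X k ω - ∫ x, X k x ∂μ))) μ ∧
      mgf (fun ω => ∑ k, (X k ω - ∫ x, X k x ∂μ)) μ t ≤ exp (ν * t ^ 2 / 2 * (1 - |t| * c)⁻¹) := by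
  obtain ⟨hexp, hbound⟩ := sum_integral_exp_mul_abs_sub_le hint hvar hmom hc (abs_nonneg t) htc
  set Y : ι → Ω → ℝ := fun k ω => X k ω - ∫ x, X k x ∂μ
  have hYmeas (k : ι) : Measurable (Y k) := (hmeas k).sub_const _
  have hYindep : iIndepFun Y μ := hindep.comp _ fun k => measurable_id.sub_const _
  have hX1 (k : ι) : Integrable (X k) μ :=
    (integrable_norm_iff (hmeas k).aestronglyMeasurable).1 (by simpa using hint k 1 le_rfl)
  have hS : (fun ω => ∑ k, Y k ω) = ∑ k, Y k := by ext ω; simp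
  refine ⟨?_, ?_⟩
  · simpa only [Finset.sum_apply, Y] using
      hYindep.integrable_exp_mul_sum hYmeas (s := univ) fun k _ =>
        integrable_exp_mul_sub (hX1 k).aestronglyMeasurable (hexp k) _
  · rw [hS, hYindep.mgf_sum hYmeas, ← sq_abs t]
    calc ∏ k, mgf (Y k) μ t
        ≤ ∏ k, exp (∫ ω, exp (|t| * |X k ω|) ∂μ - 1 - |t| * ∫ ω, |X k ω| ∂μ) :=
          prod_le_prod (fun k _ => mgf_nonneg) fun k _ => mgf_sub_integral_le (hX1 k) (hexp k)
      _ = exp (∑ k, (∫ ω, exp (|t| * |X k ω|) ∂μ - 1 - |t| * ∫ ω, |X k ω| ∂μ)) :=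
          (exp_sum _ _).symm
      _ ≤ exp (ν * |t| ^ 2 / 2 * (1 - |t| * c)⁻¹) := exp_le_exp.2 hbound

end Sums

lemma measureReal_ge_le_of_mgf_le_subGamma {Ω : Type*} [MeasurableSpace Ω] {μ : Measure Ω}
    [IsFiniteMeasure μ] {Y : Ω → ℝ} {ν c t : ℝ} (hν : 0 < ν) (hc : 0 ≤ c) (ht : 0 < t)
    (hmgf : ∀ s, 0 ≤ s → s * c < 1 →
      Integrable (fun ω => exp (s * Y ω)) μ ∧ mgf Y μ s ≤ exp (ν * s ^ 2 / 2 * (1 - s * c)⁻¹)) :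
    μ.real {ω | t ≤ Y ω} ≤ exp (-(t ^ 2) / (2 * (ν + c * t))) := by
  set s := t / (ν + c * t)
  have hd : 0 < ν + c * t := by positivity
  have hsc : s * c < 1 := by
    rw [div_mul_eq_mul_div, div_lt_one hd]
    nlinarith
  obtain ⟨hint, hbound⟩ := hmgf s (by positivity) hsc
  calc μ.real {ω | t ≤ Y ω}
      ≤ exp (-s * t) * mgf Y μ s := measure_ge_le_exp_mul_mgf t (by positivity) hint
    _ ≤ exp (-s * t) * exp (ν * s ^ 2 / 2 * (1 - s * c)⁻¹) := by gcongr
    _ = exp (-(t ^ 2) / (2 * (ν + c * t))) := by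
        rw [← exp_add]
        exact congrArg exp (subGamma_exponent_at_optimum hν hc ht)

/-- Bernstein's inequality (Boucheron–Lugosi–Massart, Corollary 2.11). -/
theorem bernstein_inequality {Ω : Type*} [MeasurableSpace Ω] (μ : Measure Ω)
    [IsProbabilityMeasure μ] {n : ℕ} (X : Fin n → Ω → ℝ)
    (hmeas : ∀ k, Measurable (X k))
    (hindep : iIndepFun X μ)
    (hint : ∀ k, ∀ ℓ : ℕ, 1 ≤ ℓ → Integrable (fun ω => |X k ω| ^ ℓ) μ)
    (ν c : ℝ) (hν : 0 < ν) (hc : 0 < c)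
    (hvar : ∑ k, ∫ ω, (X k ω) ^ 2 ∂μ ≤ ν)
    (hmom : ∀ ℓ : ℕ, 3 ≤ ℓ →
      ∑ k, ∫ ω, |X k ω| ^ ℓ ∂μ ≤ ((Nat.factorial ℓ : ℝ) / 2) * ν * c ^ (ℓ - 2))
    (t : ℝ) (ht : 0 < t) :
    (μ {ω | t ≤ |∑ k, (X k ω - ∫ x, X k x ∂μ)|}).toReal ≤
      2 * Real.exp (-(t ^ 2) / (2 * (ν + c * t))) := by
  set S := fun ω => ∑ k, (X k ω - ∫ x, X k x ∂μ)
  have hS (s : ℝ) (hsc : |s| * c < 1) :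
      Integrable (fun ω => exp (s * S ω)) μ ∧ mgf S μ s ≤ exp (ν * s ^ 2 / 2 * (1 - |s| * c)⁻¹) :=
    mgf_sum_sub_integral_le hmeas hindep hint hvar hmom hc.le hsc
  have hupper : μ.real {ω | t ≤ S ω} ≤ exp (-(t ^ 2) / (2 * (ν + c * t))) :=
    measureReal_ge_le_of_mgf_le_subGamma hν hc.le ht fun s hs hsc => by
      simpa only [abs_of_nonneg hs] using hS s (by rwa [abs_of_nonneg hs])
  have hlower : μ.real {ω | t ≤ -S ω} ≤ exp (-(t ^ 2) / (2 * (ν + c * t))) :=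
    measureReal_ge_le_of_mgf_le_subGamma hν hc.le ht fun s hs hsc => by
      have h := hS (-s) (by rwa [abs_neg, abs_of_nonneg hs])
      simp only [abs_neg, abs_of_nonneg hs, neg_sq, neg_mul, ← mul_neg] at h
      exact ⟨h.1, by rw [← Pi.neg_def, mgf_neg]; exact h.2⟩
  calc μ.real {ω | t ≤ |S ω|}
      ≤ μ.real ({ω | t ≤ S ω} ∪ {ω | t ≤ -S ω}) :=
        measureReal_mono fun ω (hω : t ≤ |S ω|) => show t ≤ S ω ∨ t ≤ -S ω from le_abs.1 hω
    _ ≤ μ.real {ω | t ≤ S ω} + μ.real {ω | t ≤ -S ω} := measureReal_union_le _ _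
    _ ≤ 2 * exp (-(t ^ 2) / (2 * (ν + c * t))) := by linarith
end

section
/- (Proposition 1.) In the setting of the sparse Poisson Lasso, define C, W as C = 𝒳ᵀ𝒳/n, W = 𝒳ᵀε̃/n with block decomposition C = [[C₁₁,C₁₂],[C₂₁,C₂₂]], W = (W₁,W₂), R₁ = (C(β* − β̃))₁, R₂ = (C(β* − β̃))₂, where β* = (β*₁, 0) with β*₁ ∈ ℝ^q having nonzero entries and C₁₁ invertible. Define the events Aₙ = { |C₁₁⁻¹W₁| < |β*₁| − (α/(2n))|C₁₁⁻¹ sign(β*₁)| − |C₁₁⁻¹R₁| } and Bₙ = { |C₂₁C₁₁⁻¹W₁ − W₂| ≤ (α/(2n))(1 − |C₂₁C₁₁⁻¹ sign(β*₁)|) − |C₂₁C₁₁⁻¹R₁ − R₂| } (all inequalities componentwise). Then on Aₙ ∩ Bₙ there exists a minimizer β̂ of ‖𝒴 − 𝒳β‖₂² + α‖β‖₁ with sign(β̂) = sign(β*); hence P(sign(β̂) = sign(β*)) ≥ P(Aₙ ∩ Bₙ). -/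
open Matrix

/-!
Primal–dual witness. The Lasso objective is convex, so `b` minimizes it as soon as
`2𝒳ᵀ(𝒴 - 𝒳b)` is `α` times a subgradient of `‖·‖₁` at `b` (KKT conditions). On the candidate
`β̌ = (β*₁ + C₁₁⁻¹(W₁ - (α/2n) sign β*₁ - R₁), 0)` this gradient equals `α sign β*₁` on the support
by construction; the event `Aₙ` makes the perturbation of `β*₁` smaller than `|β*₁|` entrywise, so
no sign changes, and the event `Bₙ` bounds the gradient off the support by `α`.
-/

def lassoObjective {m ι : Type*} [Fintype m] [Fintype ι] (X : Matrix m ι ℝ) (y : m → ℝ)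
    (α : ℝ) (β : ι → ℝ) : ℝ :=
  ∑ i, (y i - (X *ᵥ β) i) ^ 2 + α * ∑ j, |β j|

namespace Real

theorem sign_mul_self (r : ℝ) : sign r * r = |r| := by
  rcases lt_trichotomy r 0 with hr | rfl | hr
  · rw [sign_of_neg hr, abs_of_neg hr]; ring
  · simp
  · rw [sign_of_pos hr, abs_of_pos hr]; ring

theorem abs_sign_le_one (r : ℝ) : |sign r| ≤ 1 := by
  rcases sign_apply_eq r with h | h | h <;> simp [h]

theorem sign_add_of_abs_lt {r d : ℝ} (h : |d| < |r|) : sign (r + d) = sign r := by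
  rcases lt_trichotomy r 0 with hr | rfl | hr
  · rw [abs_of_neg hr] at h
    rw [sign_of_neg hr, sign_of_neg (by linarith [le_abs_self d])]
  · exact absurd h (by simp)
  · rw [abs_of_pos hr] at h
    rw [sign_of_pos hr, sign_of_pos (by linarith [neg_abs_le d])]

end Real

theorem abs_sub_mul_sub_le {a : ℝ} (ha : 0 ≤ a) (u v w : ℝ) :
    |u - a * v - w| ≤ |u| + a * |v| + |w| :=
  calc |u - a * v - w| ≤ |u - a * v| + |w| := abs_sub _ _
    _ ≤ |u| + |a * v| + |w| := by gcongr; exact abs_sub _ _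
    _ = |u| + a * |v| + |w| := by rw [abs_mul, abs_of_nonneg ha]

theorem mul_sub_le_mul_abs_sub_abs {c α b : ℝ} (hc : |c| ≤ α) (hcb : c * b = α * |b|) (t : ℝ) :
    c * (t - b) ≤ α * (|t| - |b|) := by
  have : c * t ≤ α * |t| :=
    calc c * t ≤ |c| * |t| := abs_mul c t ▸ le_abs_self _
      _ ≤ α * |t| := by gcongr
  linarith

theorem Matrix.mulVec_sumElim_zero {l m n o R : Type*} [Fintype n] [Fintype o]
    [NonUnitalNonAssocSemiring R] (M : Matrix (l ⊕ m) (n ⊕ o) R) (v : n → R) :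
    M *ᵥ Sum.elim v 0 = Sum.elim (M.toBlocks₁₁ *ᵥ v) (M.toBlocks₂₁ *ᵥ v) := by
  conv_lhs => rw [← fromBlocks_toBlocks M]
  rw [fromBlocks_mulVec]
  simp

theorem Matrix.mulVec_sumElim_inv_mulVec_zero {m n o : Type*} [Fintype n] [DecidableEq n]
    [Fintype o] {M : Matrix (n ⊕ m) (n ⊕ o) ℝ} (hM : IsUnit M.toBlocks₁₁) (u : n → ℝ) :
    M *ᵥ Sum.elim (M.toBlocks₁₁⁻¹ *ᵥ u) 0 =
      Sum.elim u (M.toBlocks₂₁ *ᵥ M.toBlocks₁₁⁻¹ *ᵥ u) := by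
  rw [mulVec_sumElim_zero, mulVec_mulVec _ M.toBlocks₁₁,
    mul_nonsing_inv _ ((isUnit_iff_isUnit_det _).mp hM), one_mulVec]

section LeastSquares

variable {m ι : Type*} [Fintype m] [Fintype ι] (X : Matrix m ι ℝ)

theorem sum_sq_sub_mulVec_add (y : m → ℝ) (b d : ι → ℝ) :
    ∑ i, (y i - (X *ᵥ (b + d)) i) ^ 2 =
      ∑ i, (y i - (X *ᵥ b) i) ^ 2 - 2 * ((Xᵀ *ᵥ (y - X *ᵥ b)) ⬝ᵥ d) +
        ∑ i, (X *ᵥ d) i ^ 2 := by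
  rw [mulVec_transpose, ← dotProduct_mulVec, mulVec_add]
  simp only [dotProduct, Pi.sub_apply, Pi.add_apply]
  rw [Finset.mul_sum, ← Finset.sum_sub_distrib, ← Finset.sum_add_distrib]
  exact Finset.sum_congr rfl fun i _ => by ring

theorem lassoObjective_le_of_kkt (y : m → ℝ) (α : ℝ) (b : ι → ℝ)
    (hbound : ∀ j, |2 * (Xᵀ *ᵥ (y - X *ᵥ b)) j| ≤ α)
    (hsupp : ∀ j, 2 * (Xᵀ *ᵥ (y - X *ᵥ b)) j * b j = α * |b j|) (β : ι → ℝ) :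
    lassoObjective X y α b ≤ lassoObjective X y α β := by
  have hcross : 2 * ((Xᵀ *ᵥ (y - X *ᵥ b)) ⬝ᵥ (β - b)) ≤ α * ∑ j, |β j| - α * ∑ j, |b j| := by
    rw [dotProduct, Finset.mul_sum, ← mul_sub, ← Finset.sum_sub_distrib, Finset.mul_sum]
    refine Finset.sum_le_sum fun j _ => ?_
    rw [Pi.sub_apply, ← mul_assoc]
    exact mul_sub_le_mul_abs_sub_abs (hbound j) (hsupp j) _
  have hexp := sum_sq_sub_mulVec_add X y b (β - b)
  rw [add_sub_cancel] at hexp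
  have hsq : 0 ≤ ∑ i, (X *ᵥ (β - b)) i ^ 2 := Finset.sum_nonneg fun i _ => sq_nonneg _
  unfold lassoObjective
  linarith

theorem lassoObjective_le_of_sign_kkt {κ : Type*} [Fintype κ] (X : Matrix m (ι ⊕ κ) ℝ)
    (y : m → ℝ) {α : ℝ} (hα : 0 ≤ α) {b : ι ⊕ κ → ℝ} (hb : ∀ j, b (.inr j) = 0)
    (hsupp : ∀ i, 2 * (Xᵀ *ᵥ (y - X *ᵥ b)) (.inl i) = α * Real.sign (b (.inl i)))
    (hoff : ∀ j, |2 * (Xᵀ *ᵥ (y - X *ᵥ b)) (.inr j)| ≤ α) (β : ι ⊕ κ → ℝ) :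
    lassoObjective X y α b ≤ lassoObjective X y α β := by
  refine lassoObjective_le_of_kkt X y α b (fun x => ?_) (fun x => ?_) β
  · rcases x with i | j
    · rw [hsupp, abs_mul, abs_of_nonneg hα]
      exact mul_le_of_le_one_right hα (Real.abs_sign_le_one _)
    · exact hoff j
  · rcases x with i | j
    · rw [hsupp, mul_assoc, Real.sign_mul_self]
    · simp [hb]

theorem transpose_mulVec_residual {c : ℝ} {C : Matrix ι ι ℝ} {ε : m → ℝ} {W : ι → ℝ}
    (hC : c • C = Xᵀ * X) (hW : c • W = Xᵀ *ᵥ ε) (βt β : ι → ℝ) :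
    Xᵀ *ᵥ (X *ᵥ βt + ε - X *ᵥ β) = c • (W - C *ᵥ (β - βt)) := by
  rw [smul_sub, hW, ← smul_mulVec, hC, ← mulVec_mulVec, mulVec_sub, mulVec_sub, mulVec_sub,
    mulVec_add]
  abel

end LeastSquares

theorem prop1_sign_recovery_general {n q r : ℕ} (hn : 0 < n) (α : ℝ) (hα : 0 < α)
    (𝒳 : Matrix (Fin n) (Fin q ⊕ Fin r) ℝ)
    (𝒴 εtilde : Fin n → ℝ) (βstar βtilde : Fin q ⊕ Fin r → ℝ)
    (hzero : ∀ j : Fin r, βstar (Sum.inr j) = 0)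
    (hY : 𝒴 = 𝒳.mulVec βtilde + εtilde)
    (C : Matrix (Fin q ⊕ Fin r) (Fin q ⊕ Fin r) ℝ)
    (hC : C = (1 / (n : ℝ)) • (𝒳ᵀ * 𝒳))
    (W : Fin q ⊕ Fin r → ℝ) (hW : W = (1 / (n : ℝ)) • 𝒳ᵀ.mulVec εtilde)
    (R : Fin q ⊕ Fin r → ℝ) (hR : R = C.mulVec (βstar - βtilde))
    (C11 : Matrix (Fin q) (Fin q) ℝ) (hC11 : C11 = C.toBlocks₁₁)
    (C21 : Matrix (Fin r) (Fin q) ℝ) (hC21 : C21 = C.toBlocks₂₁)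
    (hC11inv : IsUnit C11)
    (W1 : Fin q → ℝ) (hW1 : W1 = fun i => W (Sum.inl i))
    (W2 : Fin r → ℝ) (hW2 : W2 = fun j => W (Sum.inr j))
    (R1 : Fin q → ℝ) (hR1 : R1 = fun i => R (Sum.inl i))
    (R2 : Fin r → ℝ) (hR2 : R2 = fun j => R (Sum.inr j))
    (sgn : Fin q → ℝ) (hsgn : sgn = fun i => Real.sign (βstar (Sum.inl i)))
    -- the event Aₙ
    (hA : ∀ i, |C11⁻¹.mulVec W1 i| <
      |βstar (Sum.inl i)| - α / (2 * n) * |C11⁻¹.mulVec sgn i| - |C11⁻¹.mulVec R1 i|)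
    -- the event Bₙ
    (hB : ∀ j, |C21.mulVec (C11⁻¹.mulVec W1) j - W2 j| ≤
      α / (2 * n) * (1 - |C21.mulVec (C11⁻¹.mulVec sgn) j|) -
        |C21.mulVec (C11⁻¹.mulVec R1) j - R2 j|) :
    ∃ βhat : Fin q ⊕ Fin r → ℝ,
      (∀ β : Fin q ⊕ Fin r → ℝ,
        (∑ i, (𝒴 i - 𝒳.mulVec βhat i) ^ 2) + α * ∑ j, |βhat j| ≤
          (∑ i, (𝒴 i - 𝒳.mulVec β i) ^ 2) + α * ∑ j, |β j|) ∧
      ∀ idx, Real.sign (βhat idx) = Real.sign (βstar idx) := by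
  set a := α / (2 * n) with ha
  have h2na : 2 * (n * a) = α := by rw [ha]; field_simp
  set δ := C11⁻¹ *ᵥ (W1 - a • sgn - R1) with hδ
  have hδ_lt : ∀ i, |δ i| < |βstar (Sum.inl i)| := fun i => by
    have := abs_sub_mul_sub_le (by positivity : 0 ≤ a) ((C11⁻¹ *ᵥ W1) i) ((C11⁻¹ *ᵥ sgn) i)
      ((C11⁻¹ *ᵥ R1) i)
    simp only [hδ, mulVec_sub, mulVec_smul, Pi.sub_apply, Pi.smul_apply, smul_eq_mul] at this ⊢
    linarith [hA i]
  set βhat := βstar + Sum.elim δ 0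
  have hsign : ∀ x, Real.sign (βhat x) = Real.sign (βstar x)
    | .inl i => Real.sign_add_of_abs_lt (hδ_lt i)
    | .inr j => by simp [βhat, hzero]
  have hgrad : 𝒳ᵀ *ᵥ (𝒴 - 𝒳 *ᵥ βhat) = (n : ℝ) • (W - C *ᵥ Sum.elim δ 0 - R) := by
    have hnC : (n : ℝ) • C = 𝒳ᵀ * 𝒳 := by
      rw [hC, smul_smul, mul_one_div_cancel (by positivity), one_smul]
    have hnW : (n : ℝ) • W = 𝒳ᵀ *ᵥ εtilde := by
      rw [hW, smul_smul, mul_one_div_cancel (by positivity), one_smul]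
    rw [hY, transpose_mulVec_residual 𝒳 hnC hnW, hR, sub_sub, ← mulVec_add]
    congr 3
    simp only [βhat]
    abel
  have hres : W - C *ᵥ Sum.elim δ 0 - R = Sum.elim (a • sgn)
      (-(C21 *ᵥ C11⁻¹ *ᵥ W1 - W2 - a • C21 *ᵥ C11⁻¹ *ᵥ sgn - (C21 *ᵥ C11⁻¹ *ᵥ R1 - R2))) := by
    rw [hδ, hC11, hC21, mulVec_sumElim_inv_mulVec_zero (hC11 ▸ hC11inv)]
    simp only [mulVec_sub, mulVec_smul]
    ext (i | j) <;>
      simp only [hW1, hW2, hR1, hR2, Pi.sub_apply, Pi.smul_apply, Pi.neg_apply, Sum.elim_inl,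
        Sum.elim_inr, smul_eq_mul] <;> ring
  have hgrad_inl : ∀ i, 2 * (𝒳ᵀ *ᵥ (𝒴 - 𝒳 *ᵥ βhat)) (Sum.inl i) = α * sgn i := fun i => by
    rw [hgrad, hres, ← h2na]
    simp only [Pi.smul_apply, Sum.elim_inl, smul_eq_mul]
    ring
  have hgrad_inr : ∀ j, |2 * (𝒳ᵀ *ᵥ (𝒴 - 𝒳 *ᵥ βhat)) (Sum.inr j)| ≤ α := fun j => by
    have := abs_sub_mul_sub_le (by positivity : 0 ≤ a) ((C21 *ᵥ C11⁻¹ *ᵥ W1) j - W2 j)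
      ((C21 *ᵥ C11⁻¹ *ᵥ sgn) j) ((C21 *ᵥ C11⁻¹ *ᵥ R1) j - R2 j)
    rw [hgrad, hres, ← h2na]
    simp only [Pi.smul_apply, Sum.elim_inr, Pi.neg_apply, Pi.sub_apply, smul_eq_mul, abs_mul,
      abs_neg, abs_two, Nat.abs_cast]
    gcongr
    linarith [hB j]
  refine ⟨βhat, lassoObjective_le_of_sign_kkt 𝒳 𝒴 hα.le (fun j => by simp [βhat, hzero])
    (fun i => by rw [hgrad_inl, hsign, hsgn]) hgrad_inr, hsign⟩

/-- Proposition 1: in the sparse Poisson Lasso setting, on the event `Aₙ ∩ Bₙ` there exists a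
minimizer `β̂` of `‖𝒴 − 𝒳β‖₂² + α‖β‖₁` whose sign pattern equals that of `β*`. The columns are
indexed by `Fin q ⊕ Fin r` so that the blocks `C₁₁ = (C)₁₁`, `C₂₁ = (C)₂₁`, and the subvectors
`W₁, W₂, R₁, R₂`, are obtained by restriction. -/
theorem prop1_sign_recovery {n q r : ℕ} (hn : 0 < n) (α : ℝ) (hα : 0 < α)
    (𝒳 : Matrix (Fin n) (Fin q ⊕ Fin r) ℝ)
    (𝒴 εtilde : Fin n → ℝ) (βstar βtilde : Fin q ⊕ Fin r → ℝ)
    (hzero : ∀ j : Fin r, βstar (Sum.inr j) = 0)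
    (hne : ∀ i : Fin q, βstar (Sum.inl i) ≠ 0)
    (hY : 𝒴 = 𝒳.mulVec βtilde + εtilde)
    (C : Matrix (Fin q ⊕ Fin r) (Fin q ⊕ Fin r) ℝ)
    (hC : C = (1 / (n : ℝ)) • (𝒳ᵀ * 𝒳))
    (W : Fin q ⊕ Fin r → ℝ) (hW : W = (1 / (n : ℝ)) • 𝒳ᵀ.mulVec εtilde)
    (R : Fin q ⊕ Fin r → ℝ) (hR : R = C.mulVec (βstar - βtilde))
    (C11 : Matrix (Fin q) (Fin q) ℝ) (hC11 : C11 = C.toBlocks₁₁)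
    (C21 : Matrix (Fin r) (Fin q) ℝ) (hC21 : C21 = C.toBlocks₂₁)
    (hC11inv : IsUnit C11)
    (W1 : Fin q → ℝ) (hW1 : W1 = fun i => W (Sum.inl i))
    (W2 : Fin r → ℝ) (hW2 : W2 = fun j => W (Sum.inr j))
    (R1 : Fin q → ℝ) (hR1 : R1 = fun i => R (Sum.inl i))
    (R2 : Fin r → ℝ) (hR2 : R2 = fun j => R (Sum.inr j))
    (sgn : Fin q → ℝ) (hsgn : sgn = fun i => Real.sign (βstar (Sum.inl i)))
    -- the event Aₙ
    (hA : ∀ i, |C11⁻¹.mulVec W1 i| <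
      |βstar (Sum.inl i)| - α / (2 * n) * |C11⁻¹.mulVec sgn i| - |C11⁻¹.mulVec R1 i|)
    -- the event Bₙ
    (hB : ∀ j, |C21.mulVec (C11⁻¹.mulVec W1) j - W2 j| ≤
      α / (2 * n) * (1 - |C21.mulVec (C11⁻¹.mulVec sgn) j|) -
        |C21.mulVec (C11⁻¹.mulVec R1) j - R2 j|) :
    ∃ βhat : Fin q ⊕ Fin r → ℝ,
      (∀ β : Fin q ⊕ Fin r → ℝ,
        (∑ i, (𝒴 i - 𝒳.mulVec βhat i) ^ 2) + α * ∑ j, |βhat j| ≤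
          (∑ i, (𝒴 i - 𝒳.mulVec β i) ^ 2) + α * ∑ j, |β j|) ∧
      ∀ idx, Real.sign (βhat idx) = Real.sign (βstar idx) :=
  prop1_sign_recovery_general hn α hα 𝒳 𝒴 εtilde βstar βtilde hzero hY C hC W hW R hR C11 hC11 C21
    hC21 hC11inv W1 hW1 W2 hW2 R1 hR1 R2 hR2 sgn hsgn hA hB
end
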